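/- For every nonnegative integer n and all s, the following connection formula holds: (−s)_n (s+β1)_n = Σ_{j=0}^{n} [(−1)^j · 2^{2j−2n} · (n−j+1)_j · (β1+j−1/2)_{2n−2j} / j!] · F_j(x(s)), where F_j(x(s)) = (−4)^{−j} (−β1−2s+1/2)_j (β1+2s+1/2)_j. -/

import Mathlib

/-- The Pochhammer symbol `(a)_n = a (a+1) ⋯ (a+n-1)`. -/
noncomputable def poch (a : ℝ) (n : ℕ) : ℝ := ∏ k ∈ Finset.range n, (a + (k : ℝ))

/-- Divided-difference operator `𝔻_x` associated with the lattice `x`. -/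
noncomputable def Dlat (x : ℝ → ℝ) (f : ℝ → ℝ) (s : ℝ) : ℝ :=
  (f (s + 1/2) - f (s - 1/2)) / (x (s + 1/2) - x (s - 1/2))

/-- Averaging operator `𝕊_x`. -/
noncomputable def Slat (f : ℝ → ℝ) (s : ℝ) : ℝ :=
  (f (s + 1/2) + f (s - 1/2)) / 2

/-- The quadratic lattice `x(s) = s(s+β1)`. -/
noncomputable def latt (β1 : ℝ) : ℝ → ℝ := fun s => s * (s + β1)

/-- The monic basis `F_n(x(s)) = (-4)^{-n} (-β1-2s+1/2)_n (β1+2s+1/2)_n`. -/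
noncomputable def Fb (β1 : ℝ) (n : ℕ) (s : ℝ) : ℝ :=
  ((-4 : ℝ) ^ n)⁻¹ * poch (-β1 - 2*s + 1/2) n * poch (β1 + 2*s + 1/2) n


/-!
Both sides are polynomials in the lattice variable `x = x(s) = s(s+β1)`: since
`(i - s)(i + s + β1) = x(i) - x(s)`, the left side is `∏_{i<n} (x(i) - x)`, and
`F_{j+1} = (x - λ_j) F_j` with `λ_j = ((j+1/2)² - β1²)/4`. Multiplying an expansion
`∑_j c_{n,j} F_j` by `x(n) - x = (x(n) - λ_j) - (x - λ_j)` gives the Pascal-type recurrence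
`c_{n+1,j+1} = (x(n) - λ_{j+1}) c_{n,j+1} - c_{n,j}`, and the coefficients
`c_{n,j} = (-1)^j C(n,j) 4^{j-n} (β1+j-1/2)_{2n-2j}` of the formula satisfy it.
-/

open Finset

section NewtonExpansion

variable {R : Type*} [CommRing R] {x : R} {lam μ F : ℕ → R} {c : ℕ → ℕ → R}

theorem sum_range_mul_sub_eq_of_rec (hF : ∀ j, F (j + 1) = (x - lam j) * F j)
    (hc_top : ∀ n, c n (n + 1) = 0)
    (hc_zero : ∀ n, c (n + 1) 0 = (μ n - lam 0) * c n 0)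
    (hc_succ : ∀ n j, j ≤ n → c (n + 1) (j + 1) = (μ n - lam (j + 1)) * c n (j + 1) - c n j)
    (n : ℕ) :
    (∑ j ∈ range (n + 1), c n j * F j) * (μ n - x) = ∑ j ∈ range (n + 2), c (n + 1) j * F j := by
  calc (∑ j ∈ range (n + 1), c n j * F j) * (μ n - x)
      = ∑ j ∈ range (n + 1), ((μ n - lam j) * (c n j * F j) - c n j * F (j + 1)) := by
        rw [sum_mul]
        refine sum_congr rfl fun j _ => ?_
        rw [hF]
        ring
    _ = ∑ j ∈ range (n + 2), (μ n - lam j) * (c n j * F j)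
          - ∑ j ∈ range (n + 1), c n j * F (j + 1) := by
        rw [sum_sub_distrib, sum_range_succ _ (n + 1), hc_top]
        ring
    _ = ∑ j ∈ range (n + 1), ((μ n - lam (j + 1)) * c n (j + 1) - c n j) * F (j + 1)
          + (μ n - lam 0) * c n 0 * F 0 := by
        rw [sum_range_succ', ← sub_add_eq_add_sub, ← sum_sub_distrib]
        congr 1
        · exact sum_congr rfl fun j _ => by ring
        · ring
    _ = ∑ j ∈ range (n + 2), c (n + 1) j * F j := by
        rw [sum_range_succ' _ (n + 1), hc_zero]
        congr 1
        exact sum_congr rfl fun j hj => by rw [hc_succ n j (mem_range_succ_iff.mp hj)]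

theorem prod_sub_eq_sum_of_rec (hF0 : F 0 = 1) (hF : ∀ j, F (j + 1) = (x - lam j) * F j)
    (hc00 : c 0 0 = 1) (hc_top : ∀ n, c n (n + 1) = 0)
    (hc_zero : ∀ n, c (n + 1) 0 = (μ n - lam 0) * c n 0)
    (hc_succ : ∀ n j, j ≤ n → c (n + 1) (j + 1) = (μ n - lam (j + 1)) * c n (j + 1) - c n j)
    (n : ℕ) :
    ∏ i ∈ range n, (μ i - x) = ∑ j ∈ range (n + 1), c n j * F j := by
  induction n with
  | zero => simp [hF0, hc00]
  | succ n ih =>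
    rw [prod_range_succ, ih, sum_range_mul_sub_eq_of_rec hF hc_top hc_zero hc_succ]

end NewtonExpansion

theorem poch_zero (a : ℝ) : poch a 0 = 1 := by
  simp [poch]

theorem poch_succ (a : ℝ) (n : ℕ) : poch a (n + 1) = poch a n * (a + n) := by
  simp [poch, prod_range_succ]

theorem poch_succ' (a : ℝ) (n : ℕ) : poch a (n + 1) = a * poch (a + 1) n := by
  simp only [poch, prod_range_succ', Nat.cast_zero, add_zero, Nat.cast_succ]
  rw [mul_comm]
  exact congrArg (a * ·) (prod_congr rfl fun k _ => by ring)

theorem poch_natCast_sub_add_one {n j : ℕ} (h : j ≤ n) :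
    poch ((n : ℝ) - j + 1) j = n.descFactorial j := by
  induction j with
  | zero => simp [poch_zero]
  | succ j ih =>
    rw [Nat.cast_succ, show (n : ℝ) - (j + 1) + 1 = n - j by ring, poch_succ', ih (by omega),
      Nat.descFactorial_succ, Nat.cast_mul, Nat.cast_sub (by omega : j ≤ n)]

theorem poch_neg_mul_poch_add (β1 s : ℝ) (n : ℕ) :
    poch (-s) n * poch (s + β1) n = ∏ i ∈ range n, (latt β1 i - latt β1 s) := by
  rw [poch, poch, ← prod_mul_distrib]
  exact prod_congr rfl fun i _ => by simp only [latt]; ring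

noncomputable def fbNode (β1 : ℝ) (j : ℕ) : ℝ := ((j + 1/2) ^ 2 - β1 ^ 2) / 4

theorem Fb_zero (β1 s : ℝ) : Fb β1 0 s = 1 := by
  simp [Fb, poch_zero]

theorem Fb_succ (β1 s : ℝ) (j : ℕ) :
    Fb β1 (j + 1) s = (latt β1 s - fbNode β1 j) * Fb β1 j s := by
  simp only [Fb, latt, fbNode, poch_succ, pow_succ, mul_inv]
  ring

noncomputable def connCoeff (β1 : ℝ) (n j : ℕ) : ℝ :=
  (-1) ^ j * n.choose j * ((4 : ℝ) ^ (n - j))⁻¹ * poch (β1 + j - 1/2) (2 * (n - j))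

theorem connCoeff_zero_zero (β1 : ℝ) : connCoeff β1 0 0 = 1 := by
  simp [connCoeff, poch_zero]

theorem connCoeff_self_succ (β1 : ℝ) (n : ℕ) : connCoeff β1 n (n + 1) = 0 := by
  simp [connCoeff]

theorem connCoeff_succ_zero (β1 : ℝ) (n : ℕ) :
    connCoeff β1 (n + 1) 0 = (latt β1 n - fbNode β1 0) * connCoeff β1 n 0 := by
  simp only [connCoeff, latt, fbNode, Nat.sub_zero, Nat.choose_zero_right,
    show 2 * (n + 1) = 2 * n + 1 + 1 by ring, poch_succ, pow_succ]
  push_cast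
  field_simp
  ring

theorem connCoeff_succ_succ (β1 : ℝ) {n j : ℕ} (h : j ≤ n) :
    connCoeff β1 (n + 1) (j + 1)
      = (latt β1 n - fbNode β1 (j + 1)) * connCoeff β1 n (j + 1) - connCoeff β1 n j := by
  obtain rfl | hlt := h.eq_or_lt
  · simp [connCoeff, poch_zero, pow_succ]
  obtain ⟨m, rfl⟩ : ∃ m, n = j + m + 1 := ⟨n - j - 1, by omega⟩
  simp only [connCoeff, show j + m + 1 + 1 - (j + 1) = m + 1 by omega,
    show j + m + 1 - (j + 1) = m by omega, show j + m + 1 - j = m + 1 by omega]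
  have hb₁ : ((j + m + 1).choose (j + 1) : ℝ) = (j + m + 1).choose j * (m + 1) / (j + 1) := by
    rw [eq_div_iff (by positivity)]
    exact_mod_cast (Nat.choose_succ_right_eq (j + m + 1) j).trans (by congr 1; omega)
  have hb₂ : ((j + m + 1 + 1).choose (j + 1) : ℝ) = (j + m + 2) * (j + m + 1).choose j / (j + 1) := by
    rw [eq_div_iff (by positivity)]
    exact_mod_cast (Nat.add_one_mul_choose_eq (j + m + 1) j).symm
  have hp₁ : poch (β1 + ↑(j + 1) - 1/2) (2 * (m + 1)) = poch (β1 + ↑(j + 1) - 1/2) (2 * m)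
      * (β1 + j + 1/2 + 2 * m) * (β1 + j + 1/2 + 2 * m + 1) := by
    rw [show 2 * (m + 1) = 2 * m + 1 + 1 by ring, poch_succ, poch_succ]
    push_cast
    ring
  have hp₂ : poch (β1 + j - 1/2) (2 * (m + 1))
      = (β1 + j - 1/2) * poch (β1 + ↑(j + 1) - 1/2) (2 * m) * (β1 + j + 1/2 + 2 * m) := by
    rw [show 2 * (m + 1) = 2 * m + 1 + 1 by ring, poch_succ', poch_succ,
      show β1 + j - 1/2 + 1 = β1 + ↑(j + 1) - 1/2 by push_cast; ring]
    push_cast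
    ring
  rw [hb₁, hb₂, hp₁, hp₂]
  generalize ((j + m + 1).choose j : ℝ) = b
  generalize poch (β1 + ↑(j + 1) - 1/2) (2 * m) = P
  simp only [latt, fbNode, pow_succ]
  push_cast
  field_simp
  ring

theorem connCoeff_eq (β1 : ℝ) {n j : ℕ} (h : j ≤ n) :
    (-1 : ℝ) ^ j * (2 : ℝ) ^ (2 * (j : ℤ) - 2 * (n : ℤ)) * poch ((n : ℝ) - (j : ℝ) + 1) j
        * poch (β1 + (j : ℝ) - 1/2) (2 * (n - j)) / (Nat.factorial j : ℝ)
      = connCoeff β1 n j := by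
  have hpow : (2 : ℝ) ^ (2 * (j : ℤ) - 2 * (n : ℤ)) = ((4 : ℝ) ^ (n - j))⁻¹ := by
    rw [show 2 * (j : ℤ) - 2 * (n : ℤ) = -((2 * (n - j) : ℕ) : ℤ) by push_cast [h]; ring,
      zpow_neg, zpow_natCast, pow_mul]
    norm_num
  rw [hpow, poch_natCast_sub_add_one h, Nat.descFactorial_eq_factorial_mul_choose, connCoeff]
  push_cast
  field_simp

/-- the connection formula
`(-s)_n (s+β1)_n = Σ_{j=0}^n (-1)^j 2^{2j-2n} (n-j+1)_j (β1+j-1/2)_{2n-2j} / j! · F_j(x(s))`. -/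
theorem connection_formula (β1 s : ℝ) (n : ℕ) :
    poch (-s) n * poch (s + β1) n
      = ∑ j ∈ Finset.range (n + 1),
          (-1 : ℝ)^j * (2 : ℝ)^(2*(j : ℤ) - 2*(n : ℤ)) * poch ((n : ℝ) - (j : ℝ) + 1) j
              * poch (β1 + (j : ℝ) - 1/2) (2*(n - j)) / (Nat.factorial j : ℝ)
            * Fb β1 j s := by
  rw [poch_neg_mul_poch_add, prod_sub_eq_sum_of_rec (μ := fun i => latt β1 i)
    (F := fun j => Fb β1 j s) (Fb_zero β1 s) (Fb_succ β1 s)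
    (connCoeff_zero_zero β1) (connCoeff_self_succ β1) (connCoeff_succ_zero β1)
    (fun n j h => connCoeff_succ_succ β1 h) n]
  exact sum_congr rfl fun j hj => by rw [connCoeff_eq β1 (mem_range_succ_iff.mp hj)]
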